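/- Let k be an even integer with k ≥ 4, let d = (3k+4)/2, and let C be a symmetric (d,k) circuit code of length 4k+6 whose transition sequence has the form T(C) = (ω₁, x, ω₂, ω₁, x, ω₂), where ω₁ = (1,2,...,k+2) and ω₂ = (β₁,...,β_k). If x ∈ {1,2}, then the segment (ω₂, 1, 2) of T(C) is a bit run, i.e., the k+2 entries β₁,...,β_k, 1, 2 are pairwise distinct. -/

import Mathlib

/-- The graph of the `d`-dimensional hypercube: vertices are binary vectors of
length `d`, adjacent iff they differ in exactly one coordinate. -/
def hypercube (d : ℕ) : SimpleGraph (Fin d → Bool) where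
  Adj x y := hammingDist x y = 1
  symm := by
    constructor
    intro x y h
    rwa [hammingDist_comm]
  loopless := by
    constructor
    intro x h
    simp [hammingDist_self] at h

/-- Distance along a cycle of length `N` between positions `i` and `j`. -/
def cycDist {N : ℕ} (i j : ZMod N) : ℕ := min (i - j).val (j - i).val

/-- `x : ZMod N → (Fin d → Bool)` is a `(d,k)` circuit code of length `N`:
a cycle in the hypercube `I(d)` satisfying the spread-`k` distance requirement. -/
structure IsCircuitCode (d k N : ℕ) (x : ZMod N → Fin d → Bool) : Prop where
  inj : Function.Injective x
  adj : ∀ i : ZMod N, (hypercube d).Adj (x i) (x (i + 1))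
  spread : ∀ i j : ZMod N, min (cycDist i j) k ≤ (hypercube d).dist (x i) (x j)

/-- `τ` is the transition sequence of the cycle `x`: `τ i` is the unique
coordinate in which `x i` and `x (i+1)` differ. -/
def IsTransitionSeq {d N : ℕ} (x : ZMod N → Fin d → Bool) (τ : ZMod N → Fin d) : Prop :=
  ∀ (i : ZMod N) (j : Fin d), x (i + 1) j ≠ x i j ↔ j = τ i

/-- The segment of `τ` of length `m` starting at position `start` is a bit run:
all of its entries are distinct. -/
def IsBitRun {d N : ℕ} (τ : ZMod N → Fin d) (start : ZMod N) (m : ℕ) : Prop :=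
  ∀ a b : Fin m, τ (start + ((a : ℕ) : ZMod N)) = τ (start + ((b : ℕ) : ZMod N)) → a = b

/-- `δ(ω)`: the number of coordinates appearing an odd number of times in the
segment of `τ` of length `m` starting at `start`. -/
def segDelta {d N : ℕ} (τ : ZMod N → Fin d) (start : ZMod N) (m : ℕ) : ℕ :=
  (Finset.univ.filter fun c : Fin d =>
    Odd (Finset.univ.filter fun t : Fin m => τ (start + ((t : ℕ) : ZMod N)) = c).card).card

/-!
Along the cycle, the Hamming distance between `x s` and `x (s + m)` is the number of coordinates
occurring an odd number of times among the `m` transitions in between. So if a window of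
`m ≤ N / 2` transitions contains `r` repeated coordinates, the spread condition gives
`2 r + min m k ≤ m`. Hence transitions at cyclic distance at most `k` differ, and a window of
`k + 3` transitions has at most one repeated coordinate. By the first fact, the only possible
repeat in `(ω₂, 1, 2)` is `β₁ = 2`. Then `x = 2` would repeat in the adjacent pair `(x, β₁)`,
while `x = 1` would make both `1` and `2` repeat in `(x, ω₂, 1, 2)`.
-/

open Finset

section Hypercube

variable {d : ℕ}

lemma hypercube_exists_walk_length_eq_hammingDist (x y : Fin d → Bool) :
    ∃ p : (hypercube d).Walk x y, p.length = hammingDist x y := by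
  induction hn : hammingDist x y generalizing x with
  | zero => obtain rfl := hammingDist_eq_zero.mp hn; exact ⟨.nil, rfl⟩
  | succ n ih =>
    obtain ⟨i, hi⟩ : ∃ i, x i ≠ y i := Function.ne_iff.mp (hammingDist_ne_zero.mp (by omega))
    set x' := Function.update x i (y i)
    have hdiff : univ.filter (fun j => x j ≠ y j) = insert i (univ.filter fun j => x' j ≠ y j) := by
      ext j
      by_cases hji : j = i
      · subst hji; simp [x', hi]
      · simp [x', hji]
    have hi' : i ∉ univ.filter (fun j => x' j ≠ y j) := by simp [x']
    have hadj : (hypercube d).Adj x x' := by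
      show #{j | x j ≠ x' j} = 1
      rw [Finset.card_eq_one]
      refine ⟨i, Finset.ext fun j => ?_⟩
      by_cases hji : j = i
      · subst hji; simp [x', hi]
      · simp [x', hji]
    obtain ⟨p, hp⟩ := ih x' (by
      have : hammingDist x y = hammingDist x' y + 1 := by
        rw [hammingDist, hammingDist, hdiff, Finset.card_insert_of_notMem hi']
      omega)
    exact ⟨.cons hadj p, by simp [hp]⟩

lemma hypercube_dist_le_hammingDist (x y : Fin d → Bool) :
    (hypercube d).dist x y ≤ hammingDist x y := by
  obtain ⟨p, hp⟩ := hypercube_exists_walk_length_eq_hammingDist x y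
  exact hp ▸ SimpleGraph.dist_le p

end Hypercube

section Segment

variable {d N : ℕ}

def segCount (τ : ZMod N → Fin d) (s : ZMod N) (m : ℕ) (c : Fin d) : ℕ :=
  #{t : Fin m | τ (s + ((t : ℕ) : ZMod N)) = c}

lemma segDelta_eq (τ : ZMod N → Fin d) (s : ZMod N) (m : ℕ) :
    segDelta τ s m = #{c | Odd (segCount τ s m c)} := rfl

lemma segCount_succ (τ : ZMod N → Fin d) (s : ZMod N) (m : ℕ) (c : Fin d) :
    segCount τ s (m + 1) c = segCount τ s m c + if τ (s + m) = c then 1 else 0 := by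
  simp only [segCount, Finset.card_filter, Fin.sum_univ_castSucc, Fin.val_castSucc, Fin.val_last]

lemma sum_segCount (τ : ZMod N → Fin d) (s : ZMod N) (m : ℕ) :
    ∑ c, segCount τ s m c = m := by
  simp only [segCount]
  rw [← Finset.card_eq_sum_card_fiberwise fun t _ => Finset.mem_univ _, Finset.card_univ,
    Fintype.card_fin]

lemma two_le_segCount {τ : ZMod N → Fin d} {s : ZMod N} {m i j : ℕ} {c : Fin d}
    (hij : i ≠ j) (hi : i < m) (hj : j < m) (hτi : τ (s + i) = c) (hτj : τ (s + j) = c) :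
    2 ≤ segCount τ s m c :=
  Finset.one_lt_card.mpr ⟨⟨i, hi⟩, by simpa using hτi, ⟨j, hj⟩, by simpa using hτj,
    fun h => hij (Fin.mk.inj h)⟩

lemma segDelta_add_two_mul_card_le (τ : ZMod N → Fin d) (s : ZMod N) (m : ℕ)
    (P : Finset (Fin d)) (hP : ∀ c ∈ P, 2 ≤ segCount τ s m c) :
    segDelta τ s m + 2 * #P ≤ m := by
  have hle : ∀ c, (if Odd (segCount τ s m c) then 1 else 0) + (if c ∈ P then 2 else 0)
      ≤ segCount τ s m c := by
    intro c
    have := hP c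
    split_ifs with hodd <;> grind
  calc segDelta τ s m + 2 * #P
      = ∑ c, ((if Odd (segCount τ s m c) then 1 else 0) + (if c ∈ P then 2 else 0)) := by
        rw [Finset.sum_add_distrib, ← Finset.card_filter, Finset.sum_ite_mem, Finset.univ_inter,
          Finset.sum_const, smul_eq_mul, mul_comm, segDelta_eq]
    _ ≤ ∑ c, segCount τ s m c := Finset.sum_le_sum fun c _ => hle c
    _ = m := sum_segCount τ s m

end Segment

namespace IsTransitionSeq

variable {d N : ℕ} {x : ZMod N → Fin d → Bool} {τ : ZMod N → Fin d}

lemma ne_iff_odd_segCount (hτ : IsTransitionSeq x τ) (s : ZMod N) (m : ℕ) (j : Fin d) :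
    x (s + m) j ≠ x s j ↔ Odd (segCount τ s m j) := by
  induction m with
  | zero => simp [segCount]
  | succ m ih =>
    have hstep := hτ (s + m) j
    rw [Nat.cast_succ, ← add_assoc, segCount_succ]
    by_cases hj : τ (s + m) = j
    · have hflip : x (s + m + 1) j = !x (s + m) j :=
        Bool.eq_not.mpr (hstep.mpr hj.symm)
      rw [if_pos hj, Nat.odd_add_one, ← ih, hflip]
      cases x (s + m) j <;> cases x s j <;> simp
    · rw [if_neg hj, add_zero, ← ih, not_not.mp (mt hstep.mp (Ne.symm hj))]

lemma hammingDist_eq_segDelta (hτ : IsTransitionSeq x τ) (s : ZMod N) (m : ℕ) :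
    hammingDist (x s) (x (s + m)) = segDelta τ s m := by
  rw [segDelta_eq, hammingDist]
  congr 1
  ext j
  simp only [Finset.mem_filter, Finset.mem_univ, true_and]
  exact ne_comm.trans (hτ.ne_iff_odd_segCount s m j)

end IsTransitionSeq

lemma cycDist_add_natCast {N : ℕ} (s : ZMod N) {m : ℕ} (hm : 2 * m ≤ N) :
    cycDist s (s + m) = m := by
  rcases Nat.eq_zero_or_pos m with rfl | hm0
  · simp [cycDist]
  have : NeZero N := ⟨by omega⟩
  have hval : (m : ZMod N).val = m := ZMod.val_cast_of_lt (by omega)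
  have hneg : (-(m : ZMod N)).val = N - m := by
    rw [ZMod.neg_val, if_neg (by rw [← ZMod.val_eq_zero, hval]; omega), hval]
  rw [cycDist, sub_add_cancel_left, add_sub_cancel_left, hneg, hval]
  omega

namespace IsCircuitCode

variable {d k N : ℕ} {x : ZMod N → Fin d → Bool} {τ : ZMod N → Fin d}

lemma min_le_segDelta (hx : IsCircuitCode d k N x) (hτ : IsTransitionSeq x τ)
    (s : ZMod N) {m : ℕ} (hm : 2 * m ≤ N) :
    min m k ≤ segDelta τ s m :=
  calc min m k = min (cycDist s (s + m)) k := by rw [cycDist_add_natCast s hm]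
    _ ≤ (hypercube d).dist (x s) (x (s + m)) := hx.spread s (s + m)
    _ ≤ hammingDist (x s) (x (s + m)) := hypercube_dist_le_hammingDist _ _
    _ = segDelta τ s m := hτ.hammingDist_eq_segDelta s m

lemma two_mul_card_add_min_le (hx : IsCircuitCode d k N x) (hτ : IsTransitionSeq x τ)
    (s : ZMod N) {m : ℕ} (hm : 2 * m ≤ N) (P : Finset (Fin d))
    (hP : ∀ c ∈ P, 2 ≤ segCount τ s m c) :
    2 * #P + min m k ≤ m := by
  have := segDelta_add_two_mul_card_le τ s m P hP
  have := hx.min_le_segDelta hτ s hm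
  omega

lemma transition_add_ne (hx : IsCircuitCode d k N x) (hτ : IsTransitionSeq x τ)
    (s : ZMod N) {m : ℕ} (hm0 : 0 < m) (hmk : m ≤ k) (hm : 2 * (m + 1) ≤ N) :
    τ (s + m) ≠ τ s := by
  intro h
  have := hx.two_mul_card_add_min_le hτ s hm {τ s} <| by
    simp only [Finset.mem_singleton, forall_eq]
    exact two_le_segCount (i := 0) (j := m) (by omega) (by omega) (by omega) (by simp) h
  rw [Finset.card_singleton] at this
  omega

lemma not_two_repeats (hx : IsCircuitCode d k N x) (hτ : IsTransitionSeq x τ)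
    (s : ZMod N) {m : ℕ} (hmk : m ≤ k + 3) (hm : 2 * m ≤ N) {c₁ c₂ : Fin d} (hc : c₁ ≠ c₂)
    (h₁ : 2 ≤ segCount τ s m c₁) (h₂ : 2 ≤ segCount τ s m c₂) : False := by
  have := hx.two_mul_card_add_min_le hτ s hm {c₁, c₂} (by simp [h₁, h₂])
  rw [Finset.card_pair hc] at this
  omega

lemma isBitRun_of_ends_ne (hx : IsCircuitCode d k N x) (hτ : IsTransitionSeq x τ)
    (s : ZMod N) (hN : 2 * (k + 2) ≤ N) (hends : τ (s + (k + 1 : ℕ)) ≠ τ s) :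
    IsBitRun τ s (k + 2) := by
  intro a b hab
  by_contra hne
  wlog hlt : (a : ℕ) < b generalizing a b
  · exact this b a hab.symm (Ne.symm hne) (by omega)
  have hsub : s + (a : ℕ) + ((b - a : ℕ) : ZMod N) = s + (b : ℕ) := by
    rw [add_assoc, ← Nat.cast_add, Nat.add_sub_cancel' hlt.le]
  by_cases hclose : (b : ℕ) - a ≤ k
  · exact hx.transition_add_ne hτ (s + a) (by omega) hclose (by omega) (hsub ▸ hab.symm)
  · obtain ⟨ha, hb⟩ : (a : ℕ) = 0 ∧ (b : ℕ) = k + 1 := by omega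
    rw [ha, hb, Nat.cast_zero, add_zero] at hab
    exact hends hab.symm

end IsCircuitCode

theorem stmt_14_general (k d : ℕ) (hk4 : 4 ≤ k)
    (x : ZMod (4 * k + 6) → Fin d → Bool)
    (hx : IsCircuitCode d k (4 * k + 6) x)
    (τ : ZMod (4 * k + 6) → Fin d) (hτ : IsTransitionSeq x τ)
    (hsym : ∀ i : ZMod (4 * k + 6), τ (i + ((2 * k + 3 : ℕ) : ZMod (4 * k + 6))) = τ i)
    (hω₁ : ∀ i : ℕ, i ≤ k + 1 → (τ ((i : ℕ) : ZMod (4 * k + 6))).val = i)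
    (hx12 : (τ ((k + 2 : ℕ) : ZMod (4 * k + 6))).val = 0 ∨
            (τ ((k + 2 : ℕ) : ZMod (4 * k + 6))).val = 1) :
    IsBitRun τ ((k + 3 : ℕ) : ZMod (4 * k + 6)) (k + 2) := by
  have hcast (p i : ℕ) :
      ((p : ℕ) : ZMod (4 * k + 6)) + (i : ℕ) = ((p + i : ℕ) : ZMod (4 * k + 6)) :=
    (Nat.cast_add p i).symm
  have hc₀ : (τ ((2 * k + 3 : ℕ) : ZMod (4 * k + 6))).val = 0 := by
    rw [← zero_add (2 * k + 3), ← hcast, hsym]; exact hω₁ 0 (by omega)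
  have hc₁ : (τ ((2 * k + 4 : ℕ) : ZMod (4 * k + 6))).val = 1 := by
    rw [show 2 * k + 4 = 1 + (2 * k + 3) by ring, ← hcast, hsym]; exact hω₁ 1 (by omega)
  have hc : τ ((2 * k + 3 : ℕ) : ZMod (4 * k + 6)) ≠ τ ((2 * k + 4 : ℕ) : ZMod (4 * k + 6)) :=
    fun h => by rw [h, hc₁] at hc₀; omega
  refine hx.isBitRun_of_ends_ne hτ _ (by omega) fun hends => ?_
  rw [hcast, show k + 3 + (k + 1) = 2 * k + 4 by ring] at hends
  rcases hx12 with hx₀ | hx₁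
  · refine hx.not_two_repeats hτ ((k + 2 : ℕ) : ZMod (4 * k + 6)) le_rfl (by omega) hc ?_ ?_
    · refine two_le_segCount (i := 0) (j := k + 1) (by omega) (by omega) (by omega) ?_ ?_
      · rw [hcast, add_zero]; exact Fin.ext (hx₀.trans hc₀.symm)
      · rw [hcast, show k + 2 + (k + 1) = 2 * k + 3 by ring]
    · refine two_le_segCount (i := 1) (j := k + 2) (by omega) (by omega) (by omega) ?_ ?_
      · rw [hcast]; exact hends.symm
      · rw [hcast, show k + 2 + (k + 2) = 2 * k + 4 by ring]
  · refine hx.transition_add_ne hτ ((k + 2 : ℕ) : ZMod (4 * k + 6)) one_pos (by omega) (by omega) ?_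
    rw [hcast]; exact hends.symm.trans (Fin.ext (hc₁.trans hx₁.symm))

/-- For even `k ≥ 4`, `d = (3k+4)/2`, and a symmetric `(d,k)` circuit code of length
`4k+6` whose transition sequence has the form `(ω₁, x, ω₂, ω₁, x, ω₂)` with
`ω₁ = (1,...,k+2)` (coordinates modeled 0-based as `Fin d`): if the transition `x`
(at position `k+2`) is the coordinate `1` or `2` (0-based value `0` or `1`), then the
segment `(ω₂, 1, 2)` (starting at position `k+3`, of length `k+2`) is a bit run. -/
theorem stmt_14 (k d : ℕ) (hk : Even k) (hk4 : 4 ≤ k) (hd : 2 * d = 3 * k + 4)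
    (x : ZMod (4 * k + 6) → Fin d → Bool)
    (hx : IsCircuitCode d k (4 * k + 6) x)
    (τ : ZMod (4 * k + 6) → Fin d) (hτ : IsTransitionSeq x τ)
    (hsym : ∀ i : ZMod (4 * k + 6), τ (i + ((2 * k + 3 : ℕ) : ZMod (4 * k + 6))) = τ i)
    (hω₁ : ∀ i : ℕ, i ≤ k + 1 → (τ ((i : ℕ) : ZMod (4 * k + 6))).val = i)
    (hx12 : (τ ((k + 2 : ℕ) : ZMod (4 * k + 6))).val = 0 ∨
            (τ ((k + 2 : ℕ) : ZMod (4 * k + 6))).val = 1) :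
    IsBitRun τ ((k + 3 : ℕ) : ZMod (4 * k + 6)) (k + 2) :=
  stmt_14_general k d hk4 x hx τ hτ hsym hω₁ hx12
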